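/- Let w ∈ {0,1}ⁿ be such that M(w) = XᵀD(w)X is invertible, let β(w) = M(w)⁻¹ Xᵀ D(w) y be the weighted least squares solution, and let r_j(w) = y_j - x_jᵀβ(w). Then v(w + e_j) = v(w) + r_j(w)² / (1 + x_jᵀ M(w)⁻¹ x_j), where v(w) = ∑ᵢ wᵢ (yᵢ - xᵢᵀβ(w))² and e_j is the j-th standard basis vector (with w_j = 0). -/

import Mathlib

open Finset Matrix

/-- Weighted Gram matrix `M(w) = Xᵀ D(w) X`. -/
noncomputable def Mw {n d : ℕ} (X : Matrix (Fin n) (Fin d) ℝ) (w : Fin n → ℝ) :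
    Matrix (Fin d) (Fin d) ℝ :=
  Xᵀ * Matrix.diagonal w * X

/-- Weighted least squares solution `β(w) = M(w)⁻¹ Xᵀ D(w) y`. -/
noncomputable def betaW {n d : ℕ} (X : Matrix (Fin n) (Fin d) ℝ) (y : Fin n → ℝ)
    (w : Fin n → ℝ) : Fin d → ℝ :=
  (Mw X w)⁻¹ *ᵥ (Xᵀ *ᵥ (w * y))

/-- Weighted sum of squared residuals at the weighted LS solution. -/
noncomputable def vW {n d : ℕ} (X : Matrix (Fin n) (Fin d) ℝ) (y : Fin n → ℝ)
    (w : Fin n → ℝ) : ℝ :=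
  ∑ i, w i * (y i - (X *ᵥ betaW X y w) i) ^ 2


/-!
Adding observation `j` is a rank-one update: `M(w + eⱼ) = M(w) + xⱼxⱼᵀ` and
`Xᵀ D(w + eⱼ) y = b + yⱼ xⱼ` with `b = Xᵀ D(w) y`. By the normal equations,
`v(w) = ∑ wᵢ yᵢ² - bᵀ M(w)⁻¹ b`, and Sherman–Morrison shows that the quadratic form
`bᵀ M⁻¹ b` grows by `yⱼ² - rⱼ² / (1 + xⱼᵀ M⁻¹ xⱼ)` under this update. Positive definiteness
of `M(w)` keeps the denominator positive.
-/

namespace Matrix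

variable {m 𝕜 : Type*} [Fintype m] [Field 𝕜]

theorem dotProduct_mulVec_comm_of_isSymm {A : Matrix m m 𝕜} (hA : A.IsSymm) (u v : m → 𝕜) :
    u ⬝ᵥ (A *ᵥ v) = v ⬝ᵥ (A *ᵥ u) := by
  rw [dotProduct_mulVec, ← mulVec_transpose, hA.eq, dotProduct_comm]

variable [DecidableEq m]

theorem det_add_vecMulVec_self {M : Matrix m m 𝕜} (hM : IsUnit M.det) (x : m → 𝕜) :
    (M + vecMulVec x x).det = M.det * (1 + x ⬝ᵥ (M⁻¹ *ᵥ x)) := by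
  rw [vecMulVec_eq Unit, det_add_replicateCol_mul_replicateRow hM, det_unique (n := Unit)]
  simp only [add_apply, one_apply_eq, mul_apply, replicateRow_apply, replicateCol_apply,
    dotProduct, mulVec, Finset.sum_mul, Finset.mul_sum]
  rw [Finset.sum_comm]
  simp only [mul_assoc]

theorem isUnit_det_add_vecMulVec_self {M : Matrix m m 𝕜} (hM : IsUnit M.det) {x : m → 𝕜}
    (hc : 1 + x ⬝ᵥ (M⁻¹ *ᵥ x) ≠ 0) : IsUnit (M + vecMulVec x x).det := by
  rw [det_add_vecMulVec_self hM]
  exact hM.mul (isUnit_iff_ne_zero.mpr hc)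

/-- Sherman–Morrison, applied to a right-hand side `b + s x`. -/
theorem inv_add_vecMulVec_self_mulVec {M : Matrix m m 𝕜} (hM : IsUnit M.det) {x : m → 𝕜}
    (hc : 1 + x ⬝ᵥ (M⁻¹ *ᵥ x) ≠ 0) (b : m → 𝕜) (s : 𝕜) :
    (M + vecMulVec x x)⁻¹ *ᵥ (b + s • x) =
      M⁻¹ *ᵥ b + ((s - x ⬝ᵥ (M⁻¹ *ᵥ b)) / (1 + x ⬝ᵥ (M⁻¹ *ᵥ x))) • M⁻¹ *ᵥ x := by
  have := (M + vecMulVec x x).invertibleOfIsUnitDet (isUnit_det_add_vecMulVec_self hM hc)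
  have := M.invertibleOfIsUnitDet hM
  refine inv_mulVec_eq_vec ?_
  rw [add_mulVec, vecMulVec_mulVec, op_smul_eq_smul, mulVec_add, mulVec_smul, mulVec_mulVec,
    mulVec_mulVec, mul_inv_of_invertible, one_mulVec, one_mulVec]
  ext i
  simp only [Pi.add_apply, Pi.smul_apply, smul_eq_mul, dotProduct_add, dotProduct_smul]
  field_simp
  ring

theorem add_smul_dotProduct_inv_add_vecMulVec_self_mulVec {M : Matrix m m 𝕜}
    (hM : IsUnit M.det) (hMs : M.IsSymm) {x : m → 𝕜} (hc : 1 + x ⬝ᵥ (M⁻¹ *ᵥ x) ≠ 0)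
    (b : m → 𝕜) (s : 𝕜) :
    (b + s • x) ⬝ᵥ ((M + vecMulVec x x)⁻¹ *ᵥ (b + s • x)) =
      b ⬝ᵥ (M⁻¹ *ᵥ b) + s ^ 2 - (s - x ⬝ᵥ (M⁻¹ *ᵥ b)) ^ 2 / (1 + x ⬝ᵥ (M⁻¹ *ᵥ x)) := by
  rw [inv_add_vecMulVec_self_mulVec hM hc]
  simp only [add_dotProduct, dotProduct_add, smul_dotProduct, dotProduct_smul, smul_eq_mul,
    dotProduct_mulVec_comm_of_isSymm hMs.inv b x]
  field_simp
  ring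

end Matrix

section WeightedLeastSquares

variable {n d : ℕ} (X : Matrix (Fin n) (Fin d) ℝ) (y w : Fin n → ℝ)

theorem Mw_mulVec (v : Fin d → ℝ) : Mw X w *ᵥ v = Xᵀ *ᵥ (w * X *ᵥ v) := by
  rw [Mw, ← mulVec_mulVec, ← mulVec_mulVec]
  congr 1
  ext i
  exact mulVec_diagonal w _ i

theorem Mw_add_single (j : Fin n) :
    Mw X (w + Pi.single j 1) = Mw X w + vecMulVec (X j) (X j) := by
  have hdiag : diagonal (w + Pi.single j 1) = diagonal w + diagonal (Pi.single j 1) :=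
    (diagonal_add _ _).symm
  rw [Mw, Mw, hdiag, Matrix.mul_add, Matrix.add_mul]
  congr 1
  ext k l
  simp [mul_apply, diagonal_apply, Pi.single_apply, vecMulVec_apply]

theorem transpose_mulVec_add_single_mul (j : Fin n) :
    Xᵀ *ᵥ ((w + Pi.single j 1) * y) = Xᵀ *ᵥ (w * y) + y j • X j := by
  rw [add_mul, mulVec_add]
  congr 1
  ext k
  simp [mulVec, dotProduct, Pi.single_apply, mul_comm]

theorem vW_eq_sub_dotProduct (hdet : IsUnit (Mw X w).det) :
    vW X y w = ∑ i, w i * y i ^ 2 - (Xᵀ *ᵥ (w * y)) ⬝ᵥ betaW X y w := by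
  have hnormal : Mw X w *ᵥ betaW X y w = Xᵀ *ᵥ (w * y) := by
    rw [betaW, mulVec_mulVec, mul_nonsing_inv _ hdet, one_mulVec]
  have hquad : (Xᵀ *ᵥ (w * y)) ⬝ᵥ betaW X y w = (w * y) ⬝ᵥ (X *ᵥ betaW X y w) := by
    rw [dotProduct_mulVec, mulVec_transpose]
  have hfit : (Xᵀ *ᵥ (w * y)) ⬝ᵥ betaW X y w
      = (w * X *ᵥ betaW X y w) ⬝ᵥ (X *ᵥ betaW X y w) := by
    rw [← hnormal, Mw_mulVec, dotProduct_mulVec, mulVec_transpose]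
  simp only [vW, dotProduct, Pi.mul_apply] at hquad hfit ⊢
  have hexpand : ∑ i, w i * (y i - (X *ᵥ betaW X y w) i) ^ 2 = ∑ i, w i * y i ^ 2
      - 2 * ∑ i, w i * y i * (X *ᵥ betaW X y w) i
      + ∑ i, w i * (X *ᵥ betaW X y w) i * (X *ᵥ betaW X y w) i := by
    rw [Finset.mul_sum, ← Finset.sum_sub_distrib, ← Finset.sum_add_distrib]
    exact Finset.sum_congr rfl fun i _ ↦ by ring
  linarith

end WeightedLeastSquares

theorem stmt_4_general (n d : ℕ) (X : Matrix (Fin n) (Fin d) ℝ) (y : Fin n → ℝ)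
    (w : Fin n → ℝ) (j : Fin n)
    (hj : w j = 0) (hM : (Mw X w).PosDef) :
    vW X y (Function.update w j 1) =
      vW X y w + (y j - (X *ᵥ betaW X y w) j) ^ 2 /
        (1 + X j ⬝ᵥ ((Mw X w)⁻¹ *ᵥ X j)) := by
  have hupdate : Function.update w j 1 = w + Pi.single j 1 := by
    rw [Pi.update_eq_sub_add_single, hj, Pi.single_zero, sub_zero]
  have hdet : IsUnit (Mw X w).det := (isUnit_iff_isUnit_det _).mp hM.isUnit
  have hsymm : (Mw X w).IsSymm := isHermitian_iff_isSymm.mp hM.isHermitian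
  have hpos : 0 < 1 + X j ⬝ᵥ ((Mw X w)⁻¹ *ᵥ X j) := by
    have := hM.inv.posSemidef.dotProduct_mulVec_nonneg (X j)
    rw [star_trivial] at this
    linarith
  have hdet' : IsUnit (Mw X (w + Pi.single j 1)).det := by
    rw [Mw_add_single]
    exact isUnit_det_add_vecMulVec_self hdet hpos.ne'
  have hsum : ∑ i, (w + Pi.single j 1 : Fin n → ℝ) i * y i ^ 2
      = ∑ i, w i * y i ^ 2 + y j ^ 2 := by
    simp [add_mul, Finset.sum_add_distrib, Pi.single_apply]
  rw [hupdate, vW_eq_sub_dotProduct X y _ hdet', vW_eq_sub_dotProduct X y w hdet, hsum,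
    betaW, betaW, Mw_add_single, transpose_mulVec_add_single_mul,
    add_smul_dotProduct_inv_add_vecMulVec_self_mulVec hdet hsymm hpos.ne']
  change _ = _ + (y j - X j ⬝ᵥ _) ^ 2 / _
  ring

theorem stmt_4 (n d : ℕ) (X : Matrix (Fin n) (Fin d) ℝ) (y : Fin n → ℝ)
    (w : Fin n → ℝ) (j : Fin n)
    (hbin : ∀ i, w i = 0 ∨ w i = 1) (hj : w j = 0) (hM : (Mw X w).PosDef) :
    vW X y (Function.update w j 1) =
      vW X y w + (y j - (X *ᵥ betaW X y w) j) ^ 2 /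
        (1 + X j ⬝ᵥ ((Mw X w)⁻¹ *ᵥ X j)) :=
  stmt_4_general n d X y w j hj hM
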